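/- Let κ be an infinite cardinal and (α_i)_{i∈κ} countable ordinals with α_i ≥ 2 for all i. Then the least ordinal β such that β → (top α_i)^1_{i∈κ} is κ⁺. That is: κ⁺ → (top α_i)^1_{i∈κ}, and no ordinal below κ⁺ satisfies this relation. -/

import Mathlib

open Set Ordinal
open scoped Cardinal

universe u

/-- Natural (Hessenberg) addition of ordinals, as in Mathlib's former `Ordinal.nadd`. -/
noncomputable def Ordinal.nadd : Ordinal.{u} → Ordinal.{u} → Ordinal.{u}
  | a, b =>
    max (blsub.{u, u} a fun a' _ => Ordinal.nadd a' b) (blsub.{u, u} b fun b' _ => Ordinal.nadd a b')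
termination_by o₁ o₂ => (o₁, o₂)

infixl:65 " ♯ " => Ordinal.nadd

noncomputable section

/-- Derived set (non-isolated points) of a set of ordinals, as a subspace. -/
def deriv' (s : Set Ordinal.{0}) : Set Ordinal.{0} := {x ∈ s | x ∈ closure (s \ {x})}

/-- Iterated Cantor–Bendixson derivative. -/
def iterDeriv (s : Set Ordinal.{0}) (o : Ordinal.{0}) : Set Ordinal.{0} :=
  Ordinal.limitRecOn o s (fun _ ih => deriv' ih) (fun o _ ih => ⋂ (p : Ordinal.{0}) (h : p < o), ih p h)

/-- `s` contains a homeomorphic copy of the ordinal `α` (with its order topology). -/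
def HomeoCopy (α : Ordinal.{0}) (s : Set Ordinal.{0}) : Prop :=
  ∃ t : Set Ordinal, t ⊆ s ∧ Nonempty ((Iio α : Set Ordinal.{0}) ≃ₜ t)

/-- Two ordinals are biembeddable: each is homeomorphic to a subspace of the other. -/
def Biembed (α β : Ordinal.{0}) : Prop := HomeoCopy α (Iio β) ∧ HomeoCopy β (Iio α)

/-- Two sets of ordinals are order-homeomorphic: there is an order-preserving homeomorphism. -/
def OrderHomeo (X Y : Set Ordinal.{0}) : Prop :=
  ∃ e : X ≃ₜ Y, ∀ a b : X, a ≤ b ↔ e a ≤ e b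

/-- An ordinal is order-reinforcing. -/
def OrderReinforcing (α : Ordinal.{0}) : Prop :=
  ∀ X : Set Ordinal, Nonempty ((Iio α : Set Ordinal.{0}) ≃ₜ X) → ∃ Y ⊆ X, OrderHomeo (Iio α) Y

/-- The Cantor–Bendixson rank of an ordinal: the least exponent in its Cantor normal form. -/
def CB (x : Ordinal.{0}) : Ordinal := if x = 0 then 0 else sSup {γ | (ω : Ordinal.{0}) ^ γ ∣ x}

/-- The natural (Hessenberg) sum of a finite family of ordinals. -/
def natSumFam {k : ℕ} (α : Fin k → Ordinal.{0}) : Ordinal := (List.ofFn α).foldr (· ♯ ·) 0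

/-- The Milner–Rado sum of a finite family of ordinals. -/
def mrSumFam {k : ℕ} (α : Fin k → Ordinal.{0}) : Ordinal :=
  sInf {δ | ∀ β : Fin k → Ordinal, (∀ i, β i < α i) → δ ≠ natSumFam β}

/-- The topological pigeonhole relation `β → (top α i)¹` for finitely many colours. -/
def TopPH {k : ℕ} (β : Ordinal.{0}) (α : Fin k → Ordinal.{0}) : Prop :=
  ∀ c : Ordinal → Fin k, ∃ i, HomeoCopy (α i) (Iio β ∩ c ⁻¹' {i})

/-- The topological pigeonhole relation with an arbitrary index type of colours. -/
def TopPHFam {ι : Type*} (β : Ordinal.{0}) (α : ι → Ordinal.{0}) : Prop :=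
  ∀ c : Ordinal → ι, ∃ i, HomeoCopy (α i) (Iio β ∩ c ⁻¹' {i})

/-- `ω̄[γ, m]`: `ω ^ γ * m + 1` if `γ > 0`, and `m` if `γ = 0`. -/
def obar (γ : Ordinal.{0}) (m : ℕ) : Ordinal := if γ = 0 then (m : Ordinal.{0}) else ω ^ γ * m + 1

/-- `C` is closed and unbounded in `o`. -/
def IsClubIn (C : Set Ordinal.{0}) (o : Ordinal.{0}) : Prop :=
  C ⊆ Iio o ∧ (∀ x < o, ∃ y ∈ C, x ≤ y) ∧
    ∀ x < o, x ≠ 0 → (∀ y < x, ∃ z ∈ C, y < z ∧ z < x) → x ∈ C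

/-- `S` is stationary in `o`: it meets every club subset of `o`. -/
def StationaryIn (S : Set Ordinal.{0}) (o : Ordinal.{0}) : Prop :=
  ∀ C, IsClubIn C o → (S ∩ C).Nonempty


/-!
Below `β < κ⁺` there are at most `κ` points; colouring them injectively leaves no colour class with
the two points that a copy of `αᵢ ≥ 2` needs.

In `κ⁺`, the points of countable cofinality form a stationary set, and a union of `κ < cf κ⁺`
non-stationary sets is non-stationary, so one colour class `S` of such points is stationary. By
induction on `a < ω₁`, the `δ ∈ S` such that every `S ∩ (γ, δ]`, `γ < δ`, contains a closed set
into which `a` embeds order-preservingly still form a stationary set: at successors `δ` is put on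
top of such a set below a smaller such point, at limits `cf δ = ω` lets `ω` such blocks converge
to `δ`. A closed bounded set into which `a` embeds contains the image of `a` under a normal
function, i.e. a homeomorphic copy of `a`.
-/

open Order Topology

theorem exists_seq_cofinal_of_cof_eq_aleph0 {o : Ordinal.{u}} (ho : o.cof = ℵ₀) :
    ∃ ρ : ℕ → Ordinal.{u}, (∀ n, ρ n < o) ∧ ∀ x < o, ∃ n, x < ρ n := by
  obtain ⟨f, hf⟩ := Ordinal.exists_isFundamentalSeq (o := o) (by rw [ho, Cardinal.ord_aleph0])
  set ρ : ℕ → Ordinal.{u} := fun n ↦ f ⟨n, Ordinal.natCast_lt_omega0 n⟩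
  have hρ : StrictMono ρ := fun m n hmn ↦ hf.strictMono (Subtype.mk_lt_mk.2 (Nat.cast_lt.2 hmn))
  refine ⟨ρ, fun n ↦ (f _).2, fun x hx ↦ ?_⟩
  obtain ⟨_, ⟨⟨i, hi⟩, rfl⟩, hxi⟩ := hf.isCofinal_range ⟨x, hx⟩
  obtain ⟨n, rfl⟩ := Ordinal.lt_omega0.1 hi
  exact ⟨n + 1, (show x ≤ ρ n from hxi).trans_lt (hρ n.lt_succ_self)⟩

theorem exists_strictMono_seq_cofinal_mem {δ γ : Ordinal.{u}} (hγ : γ < δ) (hδ : δ.cof = ℵ₀)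
    {T : ℕ → Set Ordinal.{u}} (hT : ∀ n, ∀ y < δ, ∃ z ∈ T n, y < z ∧ z < δ) :
    ∃ d : ℕ → Ordinal.{u}, StrictMono d ∧ d 0 = γ ∧ (∀ n, d n < δ) ∧ (∀ n, d (n + 1) ∈ T n) ∧
      ∀ y < δ, ∃ n, y < d n := by
  obtain ⟨ρ, hρδ, hρ⟩ := exists_seq_cofinal_of_cof_eq_aleph0 hδ
  choose P hPT hP hPδ using hT
  set d : ℕ → Iio δ := fun n ↦ Nat.rec ⟨γ, hγ⟩
    (fun n y ↦ ⟨P n (max y.1 (ρ n)) (max_lt y.2 (hρδ n)), hPδ _ _ _⟩) n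
  have hd : ∀ n, max (d n).1 (ρ n) < d (n + 1) := fun n ↦ hP _ _ _
  refine ⟨fun n ↦ d n, strictMono_nat_of_lt_succ fun n ↦ (le_max_left _ _).trans_lt (hd n), rfl,
    fun n ↦ (d n).2, fun n ↦ hPT _ _ _, fun y hy ↦ ?_⟩
  obtain ⟨n, hn⟩ := hρ y hy
  exact ⟨n + 1, hn.trans ((le_max_right _ _).trans_lt (hd n))⟩

theorem IsStationary.isCofinal {α : Type*} [LinearOrder α] {S : Set α} (hS : IsStationary S) :
    IsCofinal S := fun x ↦
  let ⟨y, hyS, hy⟩ := hS ⟨(isUpperSet_Ici x).dirSupClosed,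
    fun y ↦ ⟨max x y, mem_Ici.2 (le_max_left _ _), le_max_right _ _⟩⟩
  ⟨y, hyS, hy⟩

theorem IsStationary.inter_isClub {α : Type*} [LinearOrder α] [WellFoundedLT α]
    (hα : Order.cof α ≠ ℵ₀) {S C : Set α} (hS : IsStationary S) (hC : IsClub C) :
    IsStationary (S ∩ C) := fun D hD ↦ by
  obtain ⟨x, hxS, hxC, hxD⟩ := hS (hC.inter hα hD)
  exact ⟨x, ⟨hxS, hxC⟩, hxD⟩

section Stationary

variable {v : Ordinal.{0}}

theorem cof_Iio_ne_aleph0 (hv : ℵ₀ < v.cof) : Order.cof (Iio v) ≠ ℵ₀ := by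
  rw [Ordinal.cof_Iio, ← Ordinal.lift_cof, Ne, Cardinal.lift_eq_aleph0]
  exact hv.ne'

theorem exists_isLUB_range_of_isCofinal (hv : ℵ₀ < v.cof) {C : Set (Iio v)} (hC : IsCofinal C)
    (x : Iio v) : ∃ f : ℕ → Iio v, StrictMono f ∧ (∀ n, f n ∈ C) ∧ x < f 0 ∧
      ∃ s : Iio v, IsLUB (range f) s ∧ s.1.cof = ℵ₀ := by
  have hlim : IsSuccLimit v := Ordinal.one_lt_cof_iff.1 (Cardinal.one_lt_aleph0.trans hv)
  have : NoMaxOrder (Iio v) := ⟨fun y ↦ ⟨⟨succ y.1, hlim.succ_lt y.2⟩, lt_succ y.1⟩⟩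
  have step : ∀ y : Iio v, ∃ z ∈ C, y < z := fun y ↦ by
    obtain ⟨y', hy'⟩ := exists_gt y
    obtain ⟨z, hz, hyz⟩ := hC y'
    exact ⟨z, hz, hy'.trans_le hyz⟩
  choose g hgC hg using step
  set f : ℕ → Iio v := fun n ↦ g^[n + 1] x
  have hf : StrictMono f := strictMono_nat_of_lt_succ fun n ↦ by
    simpa only [f, Function.iterate_succ_apply'] using hg (g^[n + 1] x)
  have hfv : (⨆ n, (f n).1) < v :=
    Ordinal.iSup_lt_of_lt_cof (by simpa using hv) fun n ↦ (f n).2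
  refine ⟨f, hf, fun n ↦ by simpa only [f, Function.iterate_succ_apply'] using hgC _, hg x,
    ⟨_, hfv⟩, ⟨?_, fun b hb ↦ Ordinal.iSup_le fun n ↦ hb ⟨n, rfl⟩⟩, ?_⟩
  · rintro _ ⟨n, rfl⟩
    exact Ordinal.le_iSup (fun n ↦ (f n).1) n
  · rw [Ordinal.cof_iSup (f := fun n ↦ (f n).1) hf, Order.cof_nat]

theorem isStationary_setOf_cof_eq_aleph0 (hv : ℵ₀ < v.cof) :
    IsStationary {x : Iio v | x.1.cof = ℵ₀} := fun C hC ↦ by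
  have hv0 : 0 < v := (Ordinal.one_lt_cof_iff.1 (Cardinal.one_lt_aleph0.trans hv)).bot_lt
  obtain ⟨f, -, hfC, -, s, hs, hscof⟩ := exists_isLUB_range_of_isCofinal hv hC.isCofinal ⟨0, hv0⟩
  exact ⟨s, hscof, hC.isLUB_mem (range_subset_iff.2 hfC) (range_nonempty f) hs⟩

theorem exists_isStationary_fiber {ι : Type} (hv : ℵ₀ < v.cof) (hι : #ι < v.cof)
    (c : Ordinal → ι) : ∃ i, IsStationary ((↑) ⁻¹' {x | x.cof = ℵ₀ ∧ c x = i} : Set (Iio v)) := by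
  have hι' : Cardinal.lift.{1} #ι < Cardinal.lift.{0} (Order.cof (Iio v)) := by
    rwa [Ordinal.cof_Iio, ← Ordinal.lift_cof, Cardinal.lift_lift, Cardinal.lift_lt]
  refine (isStationary_iUnion_iff (cof_Iio_ne_aleph0 hv) hι').1 ?_
  convert isStationary_setOf_cof_eq_aleph0 hv using 1
  ext
  simp

def limitPoints (v : Ordinal.{0}) (T : Set Ordinal.{0}) : Set (Iio v) :=
  {x | ∀ y < x.1, ∃ z ∈ T, y < z ∧ z < x.1}

theorem isClub_limitPoints (hv : ℵ₀ < v.cof) {T : Set Ordinal.{0}}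
    (hT : IsCofinal ((↑) ⁻¹' T : Set (Iio v))) : IsClub (limitPoints v T) where
  dirSupClosed := dirSupClosed_iff_of_linearOrder.2 fun d hd _ a ha y hy ↦ by
    obtain ⟨b, hb, hyb⟩ := (lt_isLUB_iff ha).1 (show (⟨y, hy.trans a.2⟩ : Iio v) < a from hy)
    obtain ⟨z, hz, hyz, hzb⟩ := hd hb y hyb
    exact ⟨z, hz, hyz, hzb.trans_le (ha.1 hb)⟩
  isCofinal x := by
    obtain ⟨f, hf, hfT, hxf, s, hs, -⟩ := exists_isLUB_range_of_isCofinal hv hT x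
    refine ⟨s, fun y hy ↦ ?_, hxf.le.trans (hs.1 ⟨0, rfl⟩)⟩
    obtain ⟨_, ⟨n, rfl⟩, hyn⟩ :=
      (lt_isLUB_iff hs).1 (show (⟨y, hy.trans s.2⟩ : Iio v) < s from hy)
    exact ⟨f n, hfT n, hyn, (hf n.lt_succ_self).trans_le (hs.1 ⟨n + 1, rfl⟩)⟩

end Stationary

theorem exists_strictMonoOn_Iio_of_blocks {α β : Type*} [LinearOrder α] [Preorder β] {a : α}
    {B : ℕ → α} (hBa : ∀ x < a, ∃ n, x < B n) {X : ℕ → Set β}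
    (hX : ∀ m n, m < n → ∀ x ∈ X m, ∀ y ∈ X n, x < y)
    (hf : ∀ n, ∃ f : α → β, StrictMonoOn f (Iio (B n)) ∧ MapsTo f (Iio (B n)) (X n)) :
    ∃ f : α → β, StrictMonoOn f (Iio a) ∧ MapsTo f (Iio a) (⋃ n, X n) := by
  classical
  choose f hf hfX using hf
  have hex : ∀ x : Iio a, ∃ n, x.1 < B n := fun x ↦ hBa x x.2
  set N : Iio a → ℕ := fun x ↦ Nat.find (hex x)
  have hN : ∀ x, x.1 < B (N x) := fun x ↦ Nat.find_spec (hex x)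
  refine ⟨fun x ↦ if hx : x < a then f (N ⟨x, hx⟩) x else f 0 x, fun x hx y hy hxy ↦ ?_,
    fun x hx ↦ ?_⟩
  · simp only [dif_pos (show x < a from hx), dif_pos (show y < a from hy)]
    have hNxy : N ⟨x, hx⟩ ≤ N ⟨y, hy⟩ := Nat.find_mono fun n h ↦ hxy.trans h
    rcases hNxy.eq_or_lt with heq | hlt
    · rw [heq]
      exact hf _ (heq ▸ hN ⟨x, hx⟩ :) (hN ⟨y, hy⟩) hxy
    · exact hX _ _ hlt _ (hfX _ (hN ⟨x, hx⟩)) _ (hfX _ (hN ⟨y, hy⟩))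
  · simp only [dif_pos (show x < a from hx)]
    exact mem_iUnion.2 ⟨_, hfX _ (hN ⟨x, hx⟩)⟩

theorem isClosed_insert_iUnion_of_subset_Ioc {α : Type*} [LinearOrder α] [TopologicalSpace α]
    [OrderTopology α] {δ : α} {d : ℕ → α} (hd : Monotone d) (hdδ : ∀ n, d n ≤ δ)
    (hcof : ∀ y < δ, ∃ n, y < d n) {X : ℕ → Set α} (hXc : ∀ n, IsClosed (X n))
    (hXd : ∀ n, X n ⊆ Ioc (d n) (d (n + 1))) : IsClosed (insert δ (⋃ n, X n)) := by
  refine isClosed_of_closure_subset fun y hy ↦ ?_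
  rw [insert_eq, closure_union, closure_singleton] at hy
  rcases hy with hy | hy
  · exact Or.inl hy
  have hyδ : y ≤ δ := closure_minimal
    (iUnion_subset fun n x hx ↦ ((hXd n hx).2.trans (hdδ _) :)) isClosed_Iic hy
  rcases hyδ.eq_or_lt with rfl | hyδ
  · exact Or.inl rfl
  obtain ⟨m, hm⟩ := hcof y hyδ
  -- near `y`, only the finitely many blocks below `d m` matter
  have hfin : y ∈ closure (⋃ n ∈ Finset.range m, X n) := by
    refine closure_mono ?_ (isOpen_Iio.inter_closure ⟨hm, hy⟩)
    rintro z ⟨hzm, hz⟩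
    obtain ⟨n, hn⟩ := mem_iUnion.1 hz
    have : n < m := lt_of_not_ge fun h ↦ (hzm.trans_le ((hd h).trans (hXd n hn).1.le)).false
    exact mem_biUnion (Finset.mem_coe.2 (Finset.mem_range.2 this)) hn
  rw [(isClosed_biUnion_finset fun n _ ↦ hXc n).closure_eq] at hfin
  obtain ⟨n, -, hn⟩ := mem_iUnion₂.1 hfin
  exact Or.inr (mem_iUnion.2 ⟨n, hn⟩)

def closedCopyPoints (S : Set Ordinal.{u}) (a : Ordinal.{u}) : Set Ordinal.{u} :=
  {δ ∈ S | ∀ γ < δ, ∃ X ⊆ S ∩ Ioc γ δ, IsClosed X ∧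
    ∃ f : Ordinal.{u} → Ordinal.{u}, StrictMonoOn f (Iio a) ∧ MapsTo f (Iio a) X}

theorem subset_closedCopyPoints_zero (S : Set Ordinal.{u}) : S ⊆ closedCopyPoints S 0 :=
  fun _ hδ ↦ ⟨hδ, fun _ _ ↦ ⟨∅, empty_subset _, isClosed_empty, id, fun x hx ↦ by simp at hx,
    fun x hx ↦ by simp at hx⟩⟩

theorem mem_closedCopyPoints_add_one {S : Set Ordinal.{u}} {a δ : Ordinal.{u}} (hδ : δ ∈ S)
    (hacc : ∀ y < δ, ∃ z ∈ closedCopyPoints S a, y < z ∧ z < δ) :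
    δ ∈ closedCopyPoints S (a + 1) := by
  refine ⟨hδ, fun γ hγ ↦ ?_⟩
  obtain ⟨δ', ⟨-, hδ'⟩, hγδ', hδ'δ⟩ := hacc γ hγ
  obtain ⟨X, hXS, hX, f, hf, hfX⟩ := hδ' γ hγδ'
  have hXδ : ∀ x ∈ X, x < δ := fun x hx ↦ (hXS hx).2.2.trans_lt hδ'δ
  refine ⟨insert δ X, insert_subset ⟨hδ, hγ, le_rfl⟩ fun x hx ↦
      ⟨(hXS hx).1, (hXS hx).2.1, (hXδ x hx).le⟩,
    by rw [insert_eq]; exact isClosed_singleton.union hX, Function.update f a δ,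
    fun x hx y hy hxy ↦ ?_, fun x hx ↦ ?_⟩
  · have hya : y ≤ a := lt_add_one_iff.1 (mem_Iio.1 hy)
    have hxa : x < a := hxy.trans_le hya
    rw [Function.update_of_ne hxa.ne]
    rcases hya.eq_or_lt with rfl | hya
    · rw [Function.update_self]
      exact hXδ _ (hfX hxa)
    · rw [Function.update_of_ne hya.ne]
      exact hf hxa hya hxy
  · rcases (lt_add_one_iff.1 (mem_Iio.1 hx)).eq_or_lt with rfl | hxa
    · simp
    · rw [Function.update_of_ne hxa.ne]
      exact Or.inr (hfX hxa)

theorem mem_closedCopyPoints_of_cofinal {S : Set Ordinal.{u}} {a δ : Ordinal.{u}}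
    {B : ℕ → Ordinal.{u}} (hBa : ∀ x < a, ∃ n, x < B n) (hδ : δ ∈ S) (hδcof : δ.cof = ℵ₀)
    (hacc : ∀ n, ∀ y < δ, ∃ z ∈ closedCopyPoints S (B n), y < z ∧ z < δ) :
    δ ∈ closedCopyPoints S a := by
  refine ⟨hδ, fun γ hγ ↦ ?_⟩
  obtain ⟨d, hd, rfl, hdδ, hdT, hdcof⟩ := exists_strictMono_seq_cofinal_mem hγ hδcof hacc
  choose X hXS hXc f hf hfX using fun n ↦ (hdT n).2 (d n) (hd n.lt_succ_self)
  have hblocks : ∀ m n, m < n → ∀ x ∈ X m, ∀ y ∈ X n, x < y := fun m n hmn x hx y hy ↦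
    (hXS m hx).2.2.trans_lt ((hd.monotone hmn).trans_lt (hXS n hy).2.1)
  obtain ⟨g, hg, hgX⟩ := exists_strictMonoOn_Iio_of_blocks hBa hblocks fun n ↦ ⟨f n, hf n, hfX n⟩
  refine ⟨insert δ (⋃ n, X n), insert_subset ⟨hδ, hγ, le_rfl⟩ (iUnion_subset fun n x hx ↦
      ⟨(hXS n hx).1, (hd.monotone (Nat.zero_le n)).trans_lt (hXS n hx).2.1,
        (hXS n hx).2.2.trans (hdδ _).le⟩),
    isClosed_insert_iUnion_of_subset_Ioc hd.monotone (fun n ↦ (hdδ n).le) hdcof hXc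
      fun n _ hx ↦ (hXS n hx).2, g, hg, hgX.mono_right (subset_insert _ _)⟩

theorem isStationary_closedCopyPoints {v : Ordinal.{0}} (hv : ℵ₀ < v.cof) {S : Set Ordinal}
    (hScof : ∀ x ∈ S, x.cof = ℵ₀) (hS : IsStationary ((↑) ⁻¹' S : Set (Iio v)))
    {a : Ordinal} (ha : a < ω₁) :
    IsStationary ((↑) ⁻¹' closedCopyPoints S a : Set (Iio v)) := by
  induction a using Ordinal.limitRecOn with
  | zero => exact hS.mono fun x hx ↦ subset_closedCopyPoints_zero S hx
  | add_one a ih =>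
    have hT := ih ((lt_add_one a).trans ha)
    exact (hS.inter_isClub (cof_Iio_ne_aleph0 hv) (isClub_limitPoints hv hT.isCofinal)).mono
      fun x ⟨hxS, hx⟩ ↦ mem_closedCopyPoints_add_one hxS hx
  | limit a hlim ih =>
    obtain ⟨B, hBa, hB⟩ :=
      exists_seq_cofinal_of_cof_eq_aleph0 (Ordinal.cof_eq_aleph0_of_isSuccLimit hlim ha)
    have hclub : IsClub (⋂ n, limitPoints v (closedCopyPoints S (B n))) :=
      IsClub.iInter_of_countable (cof_Iio_ne_aleph0 hv) fun n ↦
        isClub_limitPoints hv (ih _ (hBa n) ((hBa n).trans ha)).isCofinal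
    exact (hS.inter_isClub (cof_Iio_ne_aleph0 hv) hclub).mono fun x ⟨hxS, hx⟩ ↦
      mem_closedCopyPoints_of_cofinal hB hxS (hScof _ hxS) (mem_iInter.1 hx)

theorem HomeoCopy.mono {θ : Ordinal} {s t : Set Ordinal} (h : HomeoCopy θ s) (hst : s ⊆ t) :
    HomeoCopy θ t :=
  let ⟨u, hu, e⟩ := h
  ⟨u, hu.trans hst, e⟩

theorem HomeoCopy.nontrivial {θ : Ordinal} {s : Set Ordinal} (h : HomeoCopy θ s) (hθ : 2 ≤ θ) :
    s.Nontrivial := by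
  obtain ⟨t, hts, ⟨e⟩⟩ := h
  have h1 : (1 : Ordinal) < θ := one_lt_two.trans_le hθ
  refine ⟨e ⟨0, zero_lt_one.trans h1⟩, hts (e _).2, e ⟨1, h1⟩, hts (e _).2, fun h ↦ ?_⟩
  exact zero_ne_one (congrArg Subtype.val (e.injective (Subtype.ext h)))

theorem homeoCopy_of_isNormal {g : Ordinal → Ordinal} (hg : IsNormal g) {θ : Ordinal}
    {s : Set Ordinal} (hs : MapsTo g (Iio θ) s) : HomeoCopy θ s := by
  have : CompactSpace (Iic θ) := isCompact_iff_compactSpace.1 <| by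
    simpa only [Icc_bot] using isCompact_Icc (a := (⊥ : Ordinal)) (b := θ)
  have hIic : IsEmbedding (fun x : Iic θ ↦ g x) :=
    ((hg.continuous.comp continuous_subtype_val).isClosedEmbedding
      (hg.strictMono.injective.comp Subtype.val_injective)).isEmbedding
  refine ⟨_, ?_, ⟨(hIic.comp (IsEmbedding.inclusion Iio_subset_Iic_self)).toHomeomorph⟩⟩
  rintro _ ⟨x, rfl⟩
  exact hs x.2

theorem enum_le_of_strictMonoOn {s : Set Ordinal.{u}} (hs : IsCofinal s) {θ : Ordinal.{u}}
    {f : Ordinal.{u} → Ordinal.{u}} (hf : StrictMonoOn f (Iio θ)) (hfs : MapsTo f (Iio θ) s) :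
    ∀ x < θ, (enum s hs x : Ordinal.{u}) ≤ f x := by
  intro x
  induction x using WellFoundedLT.induction with
  | _ x ih =>
    intro hx
    exact enum_le_of_forall_lt (hfs hx) fun b hb ↦
      (ih b hb (hb.trans hx)).trans_lt (hf (hb.trans hx) hx hb)

theorem homeoCopy_of_isClosed {X : Set Ordinal} (hX : IsClosed X) (hXb : BddAbove X)
    {θ : Ordinal} {f : Ordinal → Ordinal} (hf : StrictMonoOn f (Iio θ))
    (hfX : MapsTo f (Iio θ) X) : HomeoCopy θ X := by
  obtain ⟨b, hb⟩ := hXb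
  set Y := X ∪ Ici (succ b)
  have hY : IsCofinal Y := fun x ↦
    ⟨max x (succ b), Or.inr (mem_Ici.2 (le_max_right _ _)), le_max_left _ _⟩
  have hnormal : IsNormal (Subtype.val ∘ enum Y hY) := isNormal_enum_iff_dirSupClosed.2 <|
    dirSupClosed_iff_of_linearOrder.2 fun d hdY hd a ha ↦
      closure_minimal hdY (hX.union isClosed_Ici) (ha.mem_closure hd)
  -- the enumeration of `Y` lies below `f`, hence below `b`, hence in `X`
  refine homeoCopy_of_isNormal hnormal fun x hx ↦ ?_
  have hle : (enum Y hY x : Ordinal) ≤ b :=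
    (enum_le_of_strictMonoOn hY hf (hfX.mono_right subset_union_left) x hx).trans (hb (hfX hx))
  exact (enum Y hY x).2.resolve_right fun h ↦ (lt_succ b).not_ge (h.trans hle)

theorem topPHFam_succ_ord {ι : Type} (hι : ℵ₀ ≤ #ι) (α : ι → Ordinal.{0})
    (hc : ∀ i, α i < ω₁) : TopPHFam (succ #ι).ord α := by
  have hcof : (succ #ι).ord.cof = succ #ι := (Cardinal.isRegular_succ hι).cof_ord
  have hv : ℵ₀ < (succ #ι).ord.cof := by rw [hcof]; exact hι.trans_lt (lt_succ _)
  intro c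
  obtain ⟨i, hi⟩ := exists_isStationary_fiber hv (by rw [hcof]; exact lt_succ _) c
  obtain ⟨δ, hδS, hδ⟩ :=
    (isStationary_closedCopyPoints hv (fun x hx ↦ hx.1) hi (hc i)).nonempty
  obtain ⟨X, hXS, hX, f, hf, hfX⟩ :=
    hδ 0 (Ordinal.cof_pos.1 (by rw [hδS.1]; exact Cardinal.aleph0_pos))
  exact ⟨i, (homeoCopy_of_isClosed hX ⟨δ.1, fun x hx ↦ (hXS hx).2.2⟩ hf hfX).mono
    fun x hx ↦ ⟨(hXS hx).2.2.trans_lt δ.2, (hXS hx).1.2⟩⟩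

theorem not_topPHFam_of_lt_succ_ord {ι : Type} [Nonempty ι] {α : ι → Ordinal.{0}}
    (h2 : ∀ i, 2 ≤ α i) {β : Ordinal.{0}} (hβ : β < (succ #ι).ord) : ¬ TopPHFam β α := by
  classical
  obtain ⟨j⟩ : Nonempty (Iio β ↪ ι) := Cardinal.lift_mk_le'.1 <| by
    rw [Cardinal.mk_Iio_ordinal, Cardinal.lift_lift]
    exact Cardinal.lift_le.2 (le_of_lt_succ (Cardinal.lt_ord.1 hβ))
  intro h
  obtain ⟨i, hi⟩ := h fun x ↦ if hx : x < β then j ⟨x, hx⟩ else Classical.arbitrary ι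
  obtain ⟨x, ⟨hxβ, hx⟩, y, ⟨hyβ, hy⟩, hxy⟩ := hi.nontrivial (h2 i)
  simp only [mem_preimage, mem_singleton_iff, dif_pos (show x < β from hxβ),
    dif_pos (show y < β from hyβ)] at hx hy
  exact hxy (congrArg Subtype.val (j.injective (hx.trans hy.symm)))

/-- For infinitely many countable ordinals `αᵢ ≥ 2`, `P^top(αᵢ)_{i∈κ} = κ⁺`. -/
theorem topPH_infinite_countable {ι : Type} (hι : ℵ₀ ≤ Cardinal.mk ι)
    (α : ι → Ordinal.{0}) (h2 : ∀ i, 2 ≤ α i) (hc : ∀ i, α i < ω₁) :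
    IsLeast {β : Ordinal.{0} | TopPHFam β α} (Order.succ (Cardinal.mk ι)).ord := by
  have : Nonempty ι := Cardinal.mk_ne_zero_iff.1 (Cardinal.aleph0_pos.trans_le hι).ne'
  exact ⟨topPHFam_succ_ord hι α hc,
    fun β hβ ↦ not_lt.1 fun hlt ↦ not_topPHFam_of_lt_succ_ord h2 hlt hβ⟩

end
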